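/- Let H ∈ {0,1}^{p×q} and let S be a set of s column indices of H. There exist an enumeration i_1, …, i_s of S and distinct row indices j_1, …, j_s such that H_{j_k, i_k} = 1 and H_{j_k, i_l} = 0 for all l > k (i.e., the submatrix of H on columns S can be brought to lower-triangular form with nonzero diagonal by row and column permutations) if and only if S contains no nonempty stopping set of H. -/

import Mathlib

/-- Support of row `j` of a binary matrix `H`. -/
def supp {p q : ℕ} (H : Fin p → Fin q → Bool) (j : Fin p) : Finset (Fin q) :=
  Finset.univ.filter (fun i => H j i)

/-- A set `S` of column indices is a stopping set of `H` if no row of `H` has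
exactly one nonzero entry in the columns indexed by `S`. -/
def IsStoppingSet {p q : ℕ} (H : Fin p → Fin q → Bool)
    (S : Finset (Fin q)) : Prop :=
  ∀ j : Fin p, (supp H j ∩ S).card ≠ 1

/-! If the columns of `S` are enumerated in lower-triangular order, then in any nonempty
`T ⊆ S` the row paired with the earliest column of `T` meets `T` in exactly that column, so `T` is
not a stopping set. Conversely, if `S` contains no stopping set, some row meets `S` in a single
column `i`; put `i` first, paired with that row, and triangularize `S \ {i}` by induction. -/

namespace StoppingSet

variable {p q n : ℕ} (H : Fin p → Fin q → Bool)

def IsTriangular (e : Fin n → Fin q) (r : Fin n → Fin p) : Prop :=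
  (∀ k, H (r k) (e k) = true) ∧ ∀ k l, k < l → H (r k) (e l) = false

variable {H}

theorem IsTriangular.injective_cols {e : Fin n → Fin q} {r : Fin n → Fin p}
    (h : IsTriangular H e r) : Function.Injective e := by
  intro k l hkl
  by_contra hne
  rcases lt_or_gt_of_ne hne with hlt | hlt
  · simpa [← hkl, h.1 k] using h.2 k l hlt
  · simpa [hkl, h.1 l] using h.2 l k hlt

theorem IsTriangular.injective_rows {e : Fin n → Fin q} {r : Fin n → Fin p}
    (h : IsTriangular H e r) : Function.Injective r := by
  intro k l hkl
  by_contra hne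
  rcases lt_or_gt_of_ne hne with hlt | hlt
  · simpa [hkl, h.1 l] using h.2 k l hlt
  · simpa [← hkl, h.1 k] using h.2 l k hlt

theorem IsTriangular.cons {e : Fin n → Fin q} {r : Fin n → Fin p} (h : IsTriangular H e r)
    {i : Fin q} {j : Fin p} (hji : H j i = true) (hj : ∀ l, H j (e l) = false) :
    IsTriangular H (Fin.cons i e : Fin (n + 1) → Fin q) (Fin.cons j r) := by
  refine ⟨Fin.cases hji h.1, fun k l hkl => ?_⟩
  induction l using Fin.cases with
  | zero => exact absurd hkl (Fin.not_lt_zero k)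
  | succ l =>
    induction k using Fin.cases with
    | zero => exact hj l
    | succ k => exact h.2 k l (Fin.succ_lt_succ_iff.mp hkl)

theorem not_isStoppingSet_of_isTriangular {e : Fin n → Fin q} {r : Fin n → Fin p}
    (h : IsTriangular H e r) {T : Finset (Fin q)} (hT : ↑T ⊆ Set.range e) (hne : T.Nonempty) :
    ¬IsStoppingSet H T := by
  obtain ⟨c, hc⟩ := hne
  obtain ⟨k₁, rfl⟩ := hT hc
  obtain ⟨k, hkT, hmin⟩ := wellFounded_lt.has_min {k | e k ∈ T} ⟨k₁, hc⟩
  simp only [Set.mem_ofPred_eq] at hkT hmin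
  have hrow : supp H (r k) ∩ T = {e k} := by
    refine Finset.eq_singleton_iff_unique_mem.mpr ⟨by simp [supp, h.1 k, hkT], ?_⟩
    intro c hc
    obtain ⟨hcH, hcT⟩ := Finset.mem_inter.mp hc
    obtain ⟨l, rfl⟩ := hT hcT
    rcases lt_trichotomy k l with hlt | rfl | hlt
    · simp [supp, h.2 k l hlt] at hcH
    · rfl
    · exact absurd hlt (hmin l hcT)
  exact fun hstop => hstop (r k) (by rw [hrow, Finset.card_singleton])

theorem exists_row_eq_single_of_not_isStoppingSet {T : Finset (Fin q)}
    (hT : ¬IsStoppingSet H T) :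
    ∃ j, ∃ i ∈ T, H j i = true ∧ ∀ c ∈ T.erase i, H j c = false := by
  obtain ⟨j, hj⟩ : ∃ j, (supp H j ∩ T).card = 1 := by
    simpa [IsStoppingSet] using hT
  obtain ⟨i, hi⟩ := Finset.card_eq_one.mp hj
  have hmem : ∀ c, c ∈ T → H j c = true → c = i := fun c hcT hc =>
    Finset.mem_singleton.mp (hi ▸ Finset.mem_inter.mpr ⟨by simpa [supp] using hc, hcT⟩)
  have hiT : i ∈ supp H j ∩ T := hi ▸ Finset.mem_singleton_self i
  refine ⟨j, i, (Finset.mem_inter.mp hiT).2, by simpa [supp] using (Finset.mem_inter.mp hiT).1, ?_⟩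
  intro c hc
  rw [Bool.eq_false_iff]
  exact fun hjc => Finset.ne_of_mem_erase hc (hmem c (Finset.mem_of_mem_erase hc) hjc)

theorem exists_isTriangular (S : Finset (Fin q)) (hcard : S.card = n)
    (hS : ∀ T ⊆ S, T.Nonempty → ¬IsStoppingSet H T) :
    ∃ (e : Fin n → Fin q) (r : Fin n → Fin p), IsTriangular H e r ∧ ∀ k, e k ∈ S := by
  induction n generalizing S with
  | zero => exact ⟨Fin.elim0, Fin.elim0, ⟨fun k => k.elim0, fun k => k.elim0⟩, fun k => k.elim0⟩
  | succ n ih =>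
    obtain ⟨j, i, hiS, hji, hj⟩ := exists_row_eq_single_of_not_isStoppingSet
      (hS S subset_rfl (Finset.card_pos.mp (by omega)))
    obtain ⟨e, r, htri, heS⟩ := ih (S.erase i) (by simp [Finset.card_erase_of_mem hiS, hcard])
      fun T hT => hS T (hT.trans (Finset.erase_subset i S))
    refine ⟨Fin.cons i e, Fin.cons j r, htri.cons hji fun l => hj _ (heS l), ?_⟩
    exact Fin.cases hiS fun k => Finset.mem_of_mem_erase (heS k)

end StoppingSet

open StoppingSet in
/-- the submatrix of `H` on the columns in `S` can be brought
into lower-triangular form with nonzero diagonal by row and column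
permutations (there is an enumeration `i_1, …, i_s` of `S` and distinct rows
`j_1, …, j_s` with `H_{j_k, i_k} = 1` and `H_{j_k, i_l} = 0` for `l > k`) iff
`S` contains no nonempty stopping set of `H`. -/
theorem stmt_16 (p q : ℕ) (H : Fin p → Fin q → Bool) (S : Finset (Fin q)) :
    (∃ (e : Fin S.card → Fin q) (r : Fin S.card → Fin p),
      Function.Injective e ∧ (∀ k, e k ∈ S) ∧ Function.Injective r ∧
      (∀ k, H (r k) (e k) = true) ∧
      (∀ k l, k < l → H (r k) (e l) = false)) ↔
    ∀ T ⊆ S, T.Nonempty → ¬ IsStoppingSet H T := by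
  constructor
  · rintro ⟨e, r, he, heS, -, hdiag, hupper⟩ T hTS hT
    have hrange : Finset.univ.image e = S :=
      Finset.eq_of_subset_of_card_le (by simpa [Finset.subset_iff] using heS)
        (by simp [Finset.card_image_of_injective _ he])
    refine not_isStoppingSet_of_isTriangular ⟨hdiag, hupper⟩ ?_ hT
    simpa [← hrange] using Finset.coe_subset.mpr hTS
  · intro hS
    obtain ⟨e, r, htri, heS⟩ := exists_isTriangular S rfl hS
    exact ⟨e, r, htri.injective_cols, heS, htri.injective_rows, htri.1, htri.2⟩
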